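/- arXiv:2604.26611 — 5 statements merged into one kernel-verified Lean document; each statement's English description precedes it below -/
import Mathlib

section
/- Let M ∈ SL(2n, ℤ), P ∈ GL(2n, ℝ) and λ₁, …, λₙ ∈ ℝ be such that P·M·P⁻¹ is the block-diagonal matrix diag(Δ, Δ) with Δ = diag(e^{λ₁}, …, e^{λₙ}). Let B = (Idₙ | i·Idₙ)·P be the complex n×2n matrix obtained by multiplying P on the left by the horizontal juxtaposition of Idₙ and i·Idₙ, and let Γ' = B·ℤ^{2n} = {B·c : c ∈ ℤ^{2n}} ⊆ ℂⁿ. Then for every α ∈ Λ_τ and every β ∈ Γ' one has ρ_τ(α)·β ∈ Γ'; indeed, if β = B·c with c ∈ ℤ^{2n}, then ρ_τ(α)·β = B·(M^{D_τ(α)}·c). -/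
/-- The first coordinate of `w` in the real basis `{1, τ}` of `ℂ`. -/
noncomputable def Dtau (τ w : ℂ) : ℂ :=
  ((starRingEnd ℂ) w * τ - w * (starRingEnd ℂ) τ) / (τ - (starRingEnd ℂ) τ)

/-- `ρ_τ(w) = diag(e^{λ₁ D_τ(w)}, …, e^{λₙ D_τ(w)})`. -/
noncomputable def rho {n : ℕ} (lam : Fin n → ℝ) (τ w : ℂ) :
    Matrix (Fin n) (Fin n) ℂ :=
  Matrix.diagonal fun i => Complex.exp ((lam i : ℂ) * Dtau τ w)

/-!
Since `Im τ ≠ 0`, `D_τ(a + bτ) = a`, so `ρ_τ(α) = diag(e^{aλ₁}, …, e^{aλₙ})`. Conjugation by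
`P` is multiplicative, so `P M P⁻¹ = diag(Δ, Δ)` gives `P Mᵃ = diag(Δᵃ, Δᵃ) P` for every
`a ∈ ℤ`, and `(Id | i Id) · diag(Δᵃ, Δᵃ) = Δᵃ · (Id | i Id)`. Hence `ρ_τ(α) B = B Mᵃ`.
-/

open Matrix Complex

theorem Dtau_ofReal_add_ofReal_mul {τ : ℂ} (hτ : τ.im ≠ 0) (a b : ℝ) :
    Dtau τ (a + b * τ) = a := by
  have hτ' : τ - (starRingEnd ℂ) τ ≠ 0 := by
    rw [sub_conj]
    simpa [Complex.ext_iff] using hτ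
  rw [Dtau, div_eq_iff hτ']
  simp only [map_add, map_mul, conj_ofReal]
  ring

theorem rho_ofReal_add_ofReal_mul {n : ℕ} (lam : Fin n → ℝ) {τ : ℂ} (hτ : τ.im ≠ 0) (a b : ℝ) :
    rho lam τ (a + b * τ) = diagonal fun i => exp (lam i * a) := by
  rw [rho, Dtau_ofReal_add_ofReal_mul hτ]

theorem Matrix.diagonal_zpow {ι K : Type*} [Fintype ι] [DecidableEq ι] [Field K] {d : ι → K}
    (hd : ∀ i, d i ≠ 0) (k : ℤ) : diagonal d ^ k = diagonal (d ^ k) := by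
  have hdet : IsUnit (diagonal d).det := by
    simpa [det_diagonal] using Finset.prod_ne_zero_iff.mpr fun i _ => hd i
  induction k using Int.induction_on with
  | zero => simp
  | succ k ih =>
    rw [Matrix.zpow_add_one hdet, ih, diagonal_mul_diagonal]
    congr 1
    funext i
    simp [zpow_add_one₀ (hd i)]
  | pred k ih =>
    have hinv : (diagonal d)⁻¹ = diagonal d⁻¹ := inv_eq_left_inv <| by
      rw [diagonal_mul_diagonal, ← diagonal_one]
      congr 1
      funext i
      exact inv_mul_cancel₀ (hd i)
    rw [Matrix.zpow_sub_one hdet, ih, hinv, diagonal_mul_diagonal]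
    congr 1
    funext i
    simp [zpow_sub_one₀ (hd i)]

theorem Matrix.fromBlocks_diagonal_zpow {l m K : Type*} [Fintype l] [DecidableEq l] [Fintype m]
    [DecidableEq m] [Field K] {d₁ : l → K} {d₂ : m → K} (hd₁ : ∀ i, d₁ i ≠ 0)
    (hd₂ : ∀ i, d₂ i ≠ 0) (k : ℤ) :
    fromBlocks (diagonal d₁) 0 0 (diagonal d₂) ^ k =
      fromBlocks (diagonal (d₁ ^ k)) 0 0 (diagonal (d₂ ^ k)) := by
  rw [fromBlocks_diagonal, fromBlocks_diagonal, diagonal_zpow (by rintro (i | i) <;> simp [*])]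
  congr 1
  ext (i | i) <;> rfl

theorem Matrix.SpecialLinearGroup.coe_zpow {ι R : Type*} [Fintype ι] [DecidableEq ι] [CommRing R]
    (g : SpecialLinearGroup ι R) (k : ℤ) :
    ((g ^ k : SpecialLinearGroup ι R) : Matrix ι ι R) = (g : Matrix ι ι R) ^ k :=
  (congrArg Units.val (map_zpow toGL g k)).trans (coe_units_zpow _ k)

theorem Matrix.SpecialLinearGroup.map_intCast_zpow {ι R : Type*} [Fintype ι] [DecidableEq ι]
    [CommRing R] (A : SpecialLinearGroup ι ℤ) (k : ℤ) :
    ((A ^ k : SpecialLinearGroup ι ℤ) : Matrix ι ι ℤ).map (Int.cast : ℤ → R) =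
      (A : Matrix ι ι ℤ).map (Int.cast : ℤ → R) ^ k :=
  (congrArg Subtype.val (map_zpow (map (Int.castRingHom R)) A k)).trans (coe_zpow _ k)

theorem Matrix.map_mul_map_intCast_zpow_of_conj_eq {ι K L : Type*} [Fintype ι] [DecidableEq ι]
    [Field K] [Field L] (f : K →+* L) {P D : Matrix ι ι K} (hP : IsUnit P)
    {A : SpecialLinearGroup ι ℤ} (h : P * (A : Matrix ι ι ℤ).map (Int.cast : ℤ → K) * P⁻¹ = D)
    (k : ℤ) :
    P.map f * ((A ^ k : SpecialLinearGroup ι ℤ) : Matrix ι ι ℤ).map (Int.cast : ℤ → L) =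
      D.map f ^ k * P.map f := by
  have hPA : P * (A : Matrix ι ι ℤ).map (Int.cast : ℤ → K) = D * P := by
    rw [← h, nonsing_inv_mul_cancel_right _ _ ((isUnit_iff_isUnit_det P).mp hP)]
  have hsemi : SemiconjBy (P.map f) ((A : Matrix ι ι ℤ).map (Int.cast : ℤ → L)) (D.map f) := by
    have := congrArg f.mapMatrix hPA
    simp only [map_mul, RingHom.mapMatrix_apply, Matrix.map_map, Function.comp_def,
      map_intCast] at this
    exact this
  have hAK : ((A : Matrix ι ι ℤ).map (Int.cast : ℤ → K)).det = 1 :=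
    (SpecialLinearGroup.map (Int.castRingHom K) A).prop
  have hAL : ((A : Matrix ι ι ℤ).map (Int.cast : ℤ → L)).det = 1 :=
    (SpecialLinearGroup.map (Int.castRingHom L) A).prop
  have hD : IsUnit (D.map f).det := by
    rw [← RingHom.mapMatrix_apply, ← f.map_det, ← h, det_conj hP]
    simp [hAK]
  rw [SpecialLinearGroup.map_intCast_zpow]
  exact (SemiconjBy.zpow_right (by simp [hAL]) hD hsemi k).eq

theorem Matrix.mulVec_mulVec_intCast_of_mul_eq {m ι R : Type*} [Fintype m] [Fintype ι]
    [CommRing R] {X : Matrix m m R} {B : Matrix m ι R} {N : Matrix ι ι ℤ}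
    (h : X * B = B * N.map (Int.cast : ℤ → R)) (c : ι → ℤ) :
    X *ᵥ (B *ᵥ fun j => (c j : R)) = B *ᵥ fun j => ((N *ᵥ c) j : R) := by
  rw [mulVec_mulVec, h, ← mulVec_mulVec]
  congr 1
  funext j
  exact (RingHom.map_mulVec (Int.castRingHom R) N c j).symm

theorem stmt_5 {n : ℕ} (lam : Fin n → ℝ) (τ : ℂ) (hτ : 0 < τ.im)
    (M : Matrix.SpecialLinearGroup (Fin n ⊕ Fin n) ℤ)
    (P : Matrix (Fin n ⊕ Fin n) (Fin n ⊕ Fin n) ℝ) (hP : IsUnit P)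
    (hPMP : P * ((M : Matrix (Fin n ⊕ Fin n) (Fin n ⊕ Fin n) ℤ).map
        (Int.cast : ℤ → ℝ)) * P⁻¹ =
      Matrix.fromBlocks (Matrix.diagonal fun i => Real.exp (lam i)) 0 0
        (Matrix.diagonal fun i => Real.exp (lam i)))
    (B : Matrix (Fin n) (Fin n ⊕ Fin n) ℂ)
    (hB : B = Matrix.fromCols (1 : Matrix (Fin n) (Fin n) ℂ)
        (Complex.I • (1 : Matrix (Fin n) (Fin n) ℂ)) *
        (P.map (Complex.ofReal : ℝ → ℂ)))
    (Γ' : Set (Fin n → ℂ))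
    (hΓ' : Γ' = {z | ∃ c : Fin n ⊕ Fin n → ℤ,
        z = B.mulVec fun j => ((c j : ℤ) : ℂ)})
    (a b : ℤ) (α : ℂ) (hα : α = (a : ℂ) + (b : ℂ) * τ) :
    (∀ β ∈ Γ', (rho lam τ α).mulVec β ∈ Γ') ∧
    (∀ c : Fin n ⊕ Fin n → ℤ,
      (rho lam τ α).mulVec (B.mulVec fun j => ((c j : ℤ) : ℂ)) =
        B.mulVec fun j =>
          ((((M ^ a : Matrix.SpecialLinearGroup (Fin n ⊕ Fin n) ℤ) :
              Matrix (Fin n ⊕ Fin n) (Fin n ⊕ Fin n) ℤ).mulVec c) j : ℂ)) := by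
  have hrho : rho lam τ α = diagonal fun i => exp (lam i * a) := by
    simpa [hα] using rho_ofReal_add_ofReal_mul lam hτ.ne' a b
  set E : Matrix (Fin n ⊕ Fin n) (Fin n ⊕ Fin n) ℂ :=
    fromBlocks (diagonal fun i => exp (lam i * a)) 0 0 (diagonal fun i => exp (lam i * a))
  have hE : (fromBlocks (diagonal fun i => Real.exp (lam i)) 0 0
      (diagonal fun i => Real.exp (lam i))).map ofReal ^ a = E := by
    have hexp (i : Fin n) : ((Real.exp (lam i) : ℝ) : ℂ) ≠ 0 :=
      ofReal_ne_zero.mpr (Real.exp_ne_zero _)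
    rw [fromBlocks_map, diagonal_map ofReal_zero, Matrix.map_zero _ ofReal_zero,
      fromBlocks_diagonal_zpow hexp hexp]
    congr <;> funext i <;> rw [Pi.pow_apply, ofReal_exp, mul_comm, exp_int_mul]
  have hconj : P.map ofReal * ((M ^ a : SpecialLinearGroup (Fin n ⊕ Fin n) ℤ) :
      Matrix (Fin n ⊕ Fin n) (Fin n ⊕ Fin n) ℤ).map (Int.cast : ℤ → ℂ) = E * P.map ofReal := by
    rw [← hE]
    exact map_mul_map_intCast_zpow_of_conj_eq ofRealHom hP hPMP a
  have hmat : rho lam τ α * B = B * ((M ^ a : SpecialLinearGroup (Fin n ⊕ Fin n) ℤ) :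
      Matrix (Fin n ⊕ Fin n) (Fin n ⊕ Fin n) ℤ).map (Int.cast : ℤ → ℂ) := by
    rw [hB, Matrix.mul_assoc, hconj, ← Matrix.mul_assoc, ← Matrix.mul_assoc, hrho]
    congr 1
    rw [fromCols_mul_fromBlocks, mul_fromCols]
    simp
  have hcomm := mulVec_mulVec_intCast_of_mul_eq hmat
  subst hΓ'
  exact ⟨by rintro _ ⟨c, rfl⟩; exact ⟨_, hcomm c⟩, hcomm⟩
end

section
/- Let (c, h, k), (c₀, h₀, k₀) ∈ D. Then τ(c, h, k) = τ(c₀, h₀, k₀) if and only if there exists a rational number q such that (c, h, k) = q·(c₀, h₀, k₀) (i.e. c = q·c₀, h = q·h₀, k = q·k₀); in that case necessarily q = k/k₀. -/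
/-- Membership in `D = {(c, h, k) ∈ ℝ × ℤ × ℤ : c ≠ 0, k ≠ 0, ck > 0}`. -/
def memD (c : ℝ) (h k : ℤ) : Prop := c ≠ 0 ∧ k ≠ 0 ∧ c * (k : ℝ) > 0

/-- The map `τ(c, h, k) = (2kπ/(4π²h² + c²))·(2hπ + ic)`. -/
noncomputable def tauOf (c : ℝ) (h k : ℤ) : ℂ :=
  (((2 * (k : ℝ) * Real.pi / (4 * Real.pi ^ 2 * (h : ℝ) ^ 2 + c ^ 2)) : ℝ) : ℂ) *
    (((2 * (h : ℝ) * Real.pi : ℝ) : ℂ) + Complex.I * (c : ℂ))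

/-!
Since `z̄ / |z|² = z⁻¹`, the map is `τ(c, h, k) = 2πk / (2πh − ic)`. Clearing the (nonzero, as
`c ≠ 0`) denominators, `τ(c, h, k) = τ(c₀, h₀, k₀)` becomes the real and imaginary parts of
`k (2πh₀ − ic₀) = k₀ (2πh − ic)`, i.e. `k h₀ = k₀ h` and `k c₀ = k₀ c`: the triples are
proportional, with ratio `k / k₀ ∈ ℚ`.
-/

open Complex Real

lemma tauOf_eq_div (c : ℝ) (h k : ℤ) :
    tauOf c h k = 2 * π * k / (2 * π * h - c * I) := by
  have hnormSq : normSq (2 * π * h - c * I) = 4 * π ^ 2 * (h : ℝ) ^ 2 + c ^ 2 := by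
    simp only [normSq_apply, sub_re, mul_re, re_ofNat, ofReal_re, im_ofNat, ofReal_im, mul_zero,
      sub_zero, intCast_re, mul_im, zero_mul, add_zero, intCast_im, I_re, I_im, mul_one, sub_self,
      sub_im, zero_sub, mul_neg, neg_mul, neg_neg]
    ring
  rw [div_eq_mul_inv, inv_def, hnormSq, tauOf]
  push_cast
  simp only [map_sub, map_mul, conj_ofReal, conj_I, map_ofNat, map_intCast]
  ring

lemma tauOf_eq_tauOf_iff {c c₀ : ℝ} (hc : c ≠ 0) (hc₀ : c₀ ≠ 0) (h k h₀ k₀ : ℤ) :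
    tauOf c h k = tauOf c₀ h₀ k₀ ↔ (k : ℝ) * h₀ = k₀ * h ∧ (k : ℝ) * c₀ = k₀ * c := by
  have hden : ∀ {c : ℝ} (h : ℤ), c ≠ 0 → 2 * π * (h : ℂ) - c * I ≠ 0 := by
    intro c h hc hzero
    apply hc
    simpa using congrArg im hzero
  rw [tauOf_eq_div, tauOf_eq_div, div_eq_div_iff (hden h hc) (hden h₀ hc₀), Complex.ext_iff]
  simp only [mul_re, re_ofNat, ofReal_re, im_ofNat, ofReal_im, mul_zero, sub_zero, intCast_re,
    mul_im, zero_mul, add_zero, intCast_im, sub_re, I_re, I_im, mul_one, sub_self, sub_im, zero_sub,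
    mul_neg, neg_zero, neg_inj]
  have h2π : 2 * π ≠ 0 := by positivity
  constructor
  · rintro ⟨hre, him⟩
    exact ⟨mul_left_cancel₀ (mul_ne_zero h2π h2π) (by linear_combination hre),
      mul_left_cancel₀ h2π (by linear_combination him)⟩
  · rintro ⟨hh, hc⟩
    exact ⟨by linear_combination (2 * π) ^ 2 * hh, by linear_combination 2 * π * hc⟩

lemma exists_rat_mul_iff_cross_mul_eq {c c₀ h h₀ : ℝ} (k : ℤ) {k₀ : ℤ} (hk₀ : k₀ ≠ 0) :
    ((k : ℝ) * h₀ = k₀ * h ∧ (k : ℝ) * c₀ = k₀ * c) ↔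
      ∃ q : ℚ, c = q * c₀ ∧ h = q * h₀ ∧ (k : ℝ) = q * k₀ := by
  have hk₀' : (k₀ : ℝ) ≠ 0 := Int.cast_ne_zero.mpr hk₀
  constructor
  · rintro ⟨hh, hc⟩
    refine ⟨k / k₀, ?_, ?_, ?_⟩ <;> push_cast <;> field_simp
    · linear_combination -hc
    · linear_combination -hh
  · rintro ⟨q, rfl, rfl, hk⟩
    exact ⟨by rw [hk]; ring, by rw [hk]; ring⟩

theorem stmt_13 (c : ℝ) (h k : ℤ) (hD : memD c h k)
    (c₀ : ℝ) (h₀ k₀ : ℤ) (hD₀ : memD c₀ h₀ k₀) :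
    (tauOf c h k = tauOf c₀ h₀ k₀ ↔
      ∃ q : ℚ, c = (q : ℝ) * c₀ ∧ (h : ℝ) = (q : ℝ) * (h₀ : ℝ) ∧
        (k : ℝ) = (q : ℝ) * (k₀ : ℝ)) ∧
    (∀ q : ℚ, (c = (q : ℝ) * c₀ ∧ (h : ℝ) = (q : ℝ) * (h₀ : ℝ) ∧
        (k : ℝ) = (q : ℝ) * (k₀ : ℝ)) → (q : ℝ) = (k : ℝ) / (k₀ : ℝ)) := by
  obtain ⟨hc, -, -⟩ := hD
  obtain ⟨hc₀, hk₀, -⟩ := hD₀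
  refine ⟨(tauOf_eq_tauOf_iff hc hc₀ h k h₀ k₀).trans (exists_rat_mul_iff_cross_mul_eq k hk₀), ?_⟩
  rintro q ⟨-, -, hk⟩
  exact eq_div_of_mul_eq (Int.cast_ne_zero.mpr hk₀) hk.symm
end

section
/- Fix (c, h, k) ∈ D and let d = gcd(h, k) > 0 and (c₀, h₀, k₀) = (c/d, h/d, k/d). Then (c₀, h₀, k₀) ∈ D and τ(c, h, k) = τ(c₀, h₀, k₀); moreover, for every triple (c̃, h̃, k̃) ∈ D with τ(c̃, h̃, k̃) = τ(c, h, k) there exists m ∈ ℤ such that (c̃, h̃, k̃) = m·(c₀, h₀, k₀). -/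
open Complex Real

theorem IsCoprime.exists_eq_mul_of_mul_eq_mul {a b a' b' : ℤ} (hab : IsCoprime a b) (hb : b ≠ 0)
    (h : a' * b = a * b') : ∃ m : ℤ, a' = m * a ∧ b' = m * b := by
  obtain ⟨m, rfl⟩ : b ∣ b' := hab.symm.dvd_of_dvd_mul_left ⟨a', by rw [← h, mul_comm]⟩
  refine ⟨m, mul_right_cancel₀ hb ?_, mul_comm _ _⟩
  rw [h]
  ring

theorem memD_of_mul {c : ℝ} {h k : ℤ} (d : ℤ) (hD : memD (d * c) (d * h) (d * k)) :
    memD c h k := by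
  obtain ⟨hc, hk, hck⟩ := hD
  refine ⟨right_ne_zero_of_mul hc, right_ne_zero_of_mul hk, ?_⟩
  have : (d : ℝ) ^ 2 * (c * k) > 0 := by
    push_cast at hck
    linarith
  exact pos_of_mul_pos_right this (sq_nonneg _)

theorem tauOf_mul (c : ℝ) (h k : ℤ) {d : ℤ} (hd : d ≠ 0) :
    tauOf (d * c) (d * h) (d * k) = tauOf c h k := by
  have hd' : (d : ℝ) ≠ 0 := by exact_mod_cast hd
  have hscalar : 2 * ((d * k : ℤ) : ℝ) * π / (4 * π ^ 2 * ((d * h : ℤ) : ℝ) ^ 2 + (d * c) ^ 2)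
      = (2 * k * π / (4 * π ^ 2 * h ^ 2 + c ^ 2)) / d := by
    push_cast
    rw [div_div, show 4 * π ^ 2 * ((d : ℝ) * h) ^ 2 + (d * c) ^ 2
      = d * (d * (4 * π ^ 2 * h ^ 2 + c ^ 2)) by ring, show 2 * (d * k) * π = d * (2 * k * π) by ring,
      mul_div_mul_left _ _ hd', mul_comm (d : ℝ)]
  unfold tauOf
  rw [hscalar]
  push_cast
  field_simp

theorem inv_tauOf {c : ℝ} (h : ℤ) {k : ℤ} (hc : c ≠ 0) (hk : k ≠ 0) :
    (tauOf c h k)⁻¹ = ((h / k : ℝ) : ℂ) - ((c / k / (2 * π) : ℝ) : ℂ) * I := by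
  apply inv_eq_of_mul_eq_one_right
  have hQ : (4 * π ^ 2 * h ^ 2 + c ^ 2 : ℂ) ≠ 0 := by
    have : 4 * π ^ 2 * (h : ℝ) ^ 2 + c ^ 2 ≠ 0 := by positivity
    exact_mod_cast this
  have hk' : (k : ℂ) ≠ 0 := by exact_mod_cast hk
  have hπ : (π : ℂ) ≠ 0 := by exact_mod_cast pi_ne_zero
  unfold tauOf
  push_cast
  field_simp
  rw [div_eq_one_iff_eq fun h0 => hQ (by linear_combination h0)]
  linear_combination -(c : ℂ) ^ 2 * I_sq

theorem div_eq_div_of_tauOf_eq {c c' : ℝ} {h k h' k' : ℤ} (hc : c ≠ 0) (hk : k ≠ 0)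
    (hc' : c' ≠ 0) (hk' : k' ≠ 0) (heq : tauOf c' h' k' = tauOf c h k) :
    (h' / k' : ℝ) = h / k ∧ c' / k' = c / k := by
  have hinv := congrArg Inv.inv heq
  rw [inv_tauOf h' hc' hk', inv_tauOf h hc hk] at hinv
  have hπ : 2 * π ≠ 0 := by positivity
  constructor
  · simpa only [sub_re, mul_re, ofReal_re, ofReal_im, I_re, I_im, mul_zero, sub_zero,
      zero_mul] using congrArg re hinv
  · simpa only [sub_im, mul_im, ofReal_re, ofReal_im, I_re, I_im, mul_one, mul_zero, zero_sub,
      add_zero, neg_inj, div_left_inj' hπ] using congrArg im hinv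

theorem exists_eq_mul_of_tauOf_eq {c c' : ℝ} {h k h' k' : ℤ} (hc : c ≠ 0) (hk : k ≠ 0)
    (hc' : c' ≠ 0) (hk' : k' ≠ 0) (hcop : IsCoprime h k) (heq : tauOf c' h' k' = tauOf c h k) :
    ∃ m : ℤ, c' = m * c ∧ h' = m * h ∧ k' = m * k := by
  have hkR : (k : ℝ) ≠ 0 := by exact_mod_cast hk
  have hk'R : (k' : ℝ) ≠ 0 := by exact_mod_cast hk'
  obtain ⟨hslope, hratio⟩ := div_eq_div_of_tauOf_eq hc hk hc' hk' heq
  rw [div_eq_div_iff hk'R hkR] at hslope hratio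
  obtain ⟨m, rfl, rfl⟩ := hcop.exists_eq_mul_of_mul_eq_mul hk (by exact_mod_cast hslope)
  refine ⟨m, mul_right_cancel₀ hkR ?_, rfl, rfl⟩
  rw [hratio]
  push_cast
  ring

theorem stmt_14 (c : ℝ) (h k : ℤ) (hD : memD c h k)
    (d : ℤ) (hd : d = Int.gcd h k)
    (c₀ : ℝ) (h₀ k₀ : ℤ)
    (hc₀ : c₀ = c / (d : ℝ)) (hh₀ : h₀ = h / d) (hk₀ : k₀ = k / d) :
    0 < d ∧ memD c₀ h₀ k₀ ∧ tauOf c h k = tauOf c₀ h₀ k₀ ∧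
    ∀ (c' : ℝ) (h' k' : ℤ), memD c' h' k' → tauOf c' h' k' = tauOf c h k →
      ∃ m : ℤ, c' = (m : ℝ) * c₀ ∧ h' = m * h₀ ∧ k' = m * k₀ := by
  have hgcd : 0 < Int.gcd h k := Int.gcd_pos_of_ne_zero_right h hD.2.1
  have hdpos : 0 < d := by rw [hd]; exact_mod_cast hgcd
  have hh : h = d * h₀ := by rw [hh₀, hd, Int.mul_ediv_cancel' (Int.gcd_dvd_left h k)]
  have hk : k = d * k₀ := by rw [hk₀, hd, Int.mul_ediv_cancel' (Int.gcd_dvd_right h k)]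
  have hc : c = d * c₀ := by rw [hc₀, mul_div_cancel₀ _ (by positivity)]
  have hcop : IsCoprime h₀ k₀ := by
    rw [Int.isCoprime_iff_gcd_eq_one, hh₀, hk₀, hd]
    exact Int.gcd_div_gcd_div_gcd hgcd
  have htau : tauOf c h k = tauOf c₀ h₀ k₀ := by
    rw [hc, hh, hk]
    exact tauOf_mul c₀ h₀ k₀ hdpos.ne'
  have hD₀ : memD c₀ h₀ k₀ := memD_of_mul d (hc ▸ hh ▸ hk ▸ hD)
  refine ⟨hdpos, hD₀, htau, fun c' h' k' hD' heq => ?_⟩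
  exact exists_eq_mul_of_tauOf_eq hD₀.1 hD₀.2.1 hD'.1 hD'.2.1 hcop (heq.trans htau)
end

section
/- Let λ ∈ ℝ with λ ≠ 0 and τ ∈ ℍ, and let f : ℂ → ℂ be a holomorphic (entire) function such that f(w + 1) = e^λ·f(w) and f(w + τ) = f(w) for every w ∈ ℂ. Then there exist c ∈ ℂ and m ∈ ℤ such that f(w) = c·e^{(2πim + λ)w} for all w ∈ ℂ. If, moreover, Re(τ)/|τ|² ∉ ℚ, then c = 0, i.e. f is identically zero. -/
/-!
For fixed `x`, the entire function `w ↦ f (x + w) * f (x - w)` is periodic with periods `1` and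
`τ`, because the multipliers picked up by the two factors cancel. It is bounded, being determined
by its values on the compact parallelogram spanned by `1` and `τ`, hence constant by Liouville:
`f (x + w) * f (x - w) = f x ^ 2`. Differentiating in `w` gives `f' x * f y = f x * f' y`, so
`f' = μ f` and `f w = c * exp (μ w)`. If `c ≠ 0` the multipliers force `μ = λ + 2πim` and
`μτ = 2πik`; since `λ ≠ 0` we get `k ≠ 0`, and comparing imaginary parts in
`μ = 2πik τ⁻¹` gives `Re τ⁻¹ = Re τ / |τ|² = m / k`.
-/

open Complex Function Set

def unitParallelogram (τ : ℂ) : Set ℂ :=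
  (fun p : ℝ × ℝ => (p.1 : ℂ) + p.2 * τ) '' (Icc 0 1 ×ˢ Icc 0 1)

theorem isCompact_unitParallelogram (τ : ℂ) : IsCompact (unitParallelogram τ) :=
  (isCompact_Icc.prod isCompact_Icc).image (by fun_prop)

theorem exists_int_add_mul_mem_unitParallelogram {τ : ℂ} (hτ : τ.im ≠ 0) (w : ℂ) :
    ∃ m n : ℤ, ∃ z ∈ unitParallelogram τ, w = z + (m * 1 + n * τ) := by
  set u := w.im / τ.im
  set v := w.re - u * τ.re
  refine ⟨⌊v⌋, ⌊u⌋, Int.fract v + Int.fract u * τ,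
    ⟨(Int.fract v, Int.fract u), ⟨⟨Int.fract_nonneg v, (Int.fract_lt_one v).le⟩,
      ⟨Int.fract_nonneg u, (Int.fract_lt_one u).le⟩⟩, rfl⟩, ?_⟩
  have hu : u * τ.im = w.im := div_mul_cancel₀ _ hτ
  have hv := Int.fract_add_floor v
  have hu' := Int.fract_add_floor u
  apply Complex.ext <;>
    simp only [add_re, add_im, mul_re, mul_im, ofReal_re, ofReal_im, intCast_re, intCast_im,
      mul_one, zero_mul, sub_zero, add_zero, zero_add]
  · linear_combination -hv - τ.re * hu'
  · linear_combination -τ.im * hu' - hu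

theorem Continuous.isBounded_range_of_periodic {E : Type*} [PseudoMetricSpace E] {f : ℂ → E}
    {τ : ℂ} (hf : Continuous f) (h1 : Periodic f 1) (hτ : Periodic f τ) (him : τ.im ≠ 0) :
    Bornology.IsBounded (range f) := by
  refine ((isCompact_unitParallelogram τ).image hf).isBounded.subset ?_
  rintro _ ⟨w, rfl⟩
  obtain ⟨m, n, z, hz, rfl⟩ := exists_int_add_mul_mem_unitParallelogram him w
  exact ⟨z, hz, ((h1.int_mul m).add_period (hτ.int_mul n) z).symm⟩

theorem Differentiable.apply_eq_apply_of_periodic {E : Type*} [NormedAddCommGroup E]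
    [NormedSpace ℂ E] {f : ℂ → E} {τ : ℂ} (hf : Differentiable ℂ f) (h1 : Periodic f 1)
    (hτ : Periodic f τ) (him : τ.im ≠ 0) (z w : ℂ) : f z = f w :=
  hf.apply_eq_apply_of_bounded (hf.continuous.isBounded_range_of_periodic h1 hτ him) z w

theorem periodic_apply_add_mul_apply_sub {G R : Type*} [AddCommGroup G] [CommMonoid R]
    {f : G → R} {p : G} {a : R} (hf : ∀ w, f (w + p) = a * f w) (x : G) :
    Periodic (fun w => f (x + w) * f (x - w)) p := by
  intro w
  have h₁ : f (x + (w + p)) = a * f (x + w) := by rw [← add_assoc, hf]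
  have h₂ : f (x - w) = a * f (x - (w + p)) := by rw [← hf, sub_add_eq_sub_sub, sub_add_cancel]
  simp only [h₁, h₂, mul_assoc, mul_left_comm]

theorem eq_apply_zero_mul_exp_of_deriv_eq_mul {f : ℂ → ℂ} {μ : ℂ} (hf : Differentiable ℂ f)
    (hderiv : ∀ x, deriv f x = μ * f x) (w : ℂ) : f w = f 0 * exp (μ * w) := by
  set g : ℂ → ℂ := fun w => f w * exp (-(μ * w))
  have hg : ∀ x, HasDerivAt g 0 x := fun x =>
    ((hf x).hasDerivAt.mul ((hasDerivAt_id x).const_mul μ).neg.cexp).congr_deriv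
      (by simp only [hderiv]; ring)
  have hgw := is_const_of_deriv_eq_zero (fun x => (hg x).differentiableAt)
    (fun x => (hg x).deriv) w 0
  simp only [g, mul_zero, neg_zero, exp_zero, mul_one] at hgw
  rw [← hgw, mul_assoc, ← exp_add, neg_add_cancel, exp_zero, mul_one]

section Quasiperiodic

variable {f : ℂ → ℂ} {a b τ : ℂ} (hf : Differentiable ℂ f) (h1 : ∀ w, f (w + 1) = a * f w)
  (hτ : ∀ w, f (w + τ) = b * f w) (him : τ.im ≠ 0)
include hf h1 hτ him

theorem apply_add_mul_apply_sub_eq_sq (x w : ℂ) : f (x + w) * f (x - w) = f x ^ 2 := by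
  have hdiff : Differentiable ℂ fun w => f (x + w) * f (x - w) := by fun_prop
  simpa [sq] using hdiff.apply_eq_apply_of_periodic (periodic_apply_add_mul_apply_sub h1 x)
    (periodic_apply_add_mul_apply_sub hτ x) him w 0

theorem deriv_mul_apply_eq_apply_mul_deriv (x y : ℂ) : deriv f x * f y = f x * deriv f y := by
  set c := (x + y) / 2
  set w := (x - y) / 2
  have hprod : HasDerivAt (fun w => f (c + w) * f (c - w))
      (deriv f (c + w) * f (c - w) + f (c + w) * -deriv f (c - w)) w :=
    ((hf (c + w)).hasDerivAt.comp_const_add c w).mul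
      ((hf (c - w)).hasDerivAt.comp_const_sub c w)
  have hconst : HasDerivAt (fun w => f (c + w) * f (c - w)) 0 w := by
    simp only [apply_add_mul_apply_sub_eq_sq hf h1 hτ him c]
    exact hasDerivAt_const w _
  rw [show c + w = x by ring, show c - w = y by ring] at hprod
  linear_combination hprod.unique hconst

theorem exists_deriv_eq_mul : ∃ μ, ∀ x, deriv f x = μ * f x := by
  by_cases hzero : ∀ y, f y = 0
  · refine ⟨0, fun x => ?_⟩
    rw [show f = 0 from funext hzero]
    simp
  obtain ⟨y, hy⟩ := not_forall.1 hzero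
  refine ⟨deriv f y / f y, fun x => ?_⟩
  rw [div_mul_eq_mul_div, eq_div_iff hy]
  linear_combination deriv_mul_apply_eq_apply_mul_deriv hf h1 hτ him x y

theorem exists_eq_apply_zero_mul_exp : ∃ μ, ∀ w, f w = f 0 * exp (μ * w) :=
  (exists_deriv_eq_mul hf h1 hτ him).imp fun _ => eq_apply_zero_mul_exp_of_deriv_eq_mul hf

end Quasiperiodic

theorem re_inv_eq_of_mul_eq {lam : ℝ} (hlam : lam ≠ 0) {τ : ℂ} {m k : ℤ}
    (h : (lam + m * (2 * Real.pi * I)) * τ = k * (2 * Real.pi * I)) : τ⁻¹.re = m / k := by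
  rcases eq_or_ne τ 0 with rfl | hτ
  · simp_all
  have h' : (lam : ℂ) + m * (2 * Real.pi * I) = k * (2 * Real.pi * I) * τ⁻¹ := by
    rw [← h]; field_simp
  have hre := congrArg re h'
  have him := congrArg im h'
  simp only [add_re, add_im, mul_re, mul_im, ofReal_re, ofReal_im, intCast_re, intCast_im,
    I_re, I_im, re_ofNat, im_ofNat] at hre him
  have hk : (k : ℝ) ≠ 0 := by
    rintro hk
    apply hlam
    simpa [hk] using hre
  rw [eq_div_iff hk]
  apply mul_left_cancel₀ Real.two_pi_pos.ne'
  linear_combination -him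

theorem stmt_15 (lam : ℝ) (hlam : lam ≠ 0) (τ : ℂ) (hτ : 0 < τ.im)
    (f : ℂ → ℂ) (hf : Differentiable ℂ f)
    (hper1 : ∀ w : ℂ, f (w + 1) = Complex.exp (lam : ℂ) * f w)
    (hperτ : ∀ w : ℂ, f (w + τ) = f w) :
    ∃ (c : ℂ) (m : ℤ),
      (∀ w : ℂ, f w = c * Complex.exp ((2 * Real.pi * Complex.I * m + (lam : ℂ)) * w)) ∧
      ((¬ ∃ q : ℚ, τ.re / ‖τ‖ ^ 2 = (q : ℝ)) → c = 0) := by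
  obtain ⟨μ, hμ⟩ := exists_eq_apply_zero_mul_exp hf hper1 (b := 1) (by simpa using hperτ) hτ.ne'
  by_cases hc : f 0 = 0
  · exact ⟨0, 0, fun w => by simp [hμ w, hc], fun _ => rfl⟩
  have hexp1 : exp μ = exp lam := by
    have := hper1 0
    rw [zero_add, hμ 1, mul_one, mul_comm (exp _)] at this
    exact mul_left_cancel₀ hc this
  have hexpτ : exp (μ * τ) = 1 := by
    have := hperτ 0
    rw [zero_add, hμ τ] at this
    exact mul_left_cancel₀ hc (this.trans (mul_one _).symm)
  obtain ⟨m, hm⟩ := exp_eq_exp_iff_exists_int.1 hexp1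
  obtain ⟨k, hk⟩ := exp_eq_one_iff.1 hexpτ
  refine ⟨f 0, m, fun w => by rw [hμ w, hm]; ring_nf, fun hirr => (hirr ⟨m / k, ?_⟩).elim⟩
  rw [Complex.sq_norm, ← inv_re, re_inv_eq_of_mul_eq hlam (hm ▸ hk)]
  norm_cast
end

section
/- Let λ ∈ ℝ with λ ≠ 0 and τ ∈ ℍ, and let f : ℂ → ℂ be a holomorphic (entire) function such that exp(λ·D_τ(α))·f(w) = f(α + w) for every α ∈ Λ_τ and every w ∈ ℂ. Then there exist c ∈ ℂ and m ∈ ℤ such that f(w) = c·e^{(2πim + λ)w} for all w ∈ ℂ, and c = 0 if Re(τ)/|τ|² ∉ ℚ. -/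
/-- Membership in the lattice `Λ_τ = ℤ + τ·ℤ ⊆ ℂ`. -/
def inLambda (τ z : ℂ) : Prop := ∃ a b : ℤ, z = (a : ℂ) + (b : ℂ) * τ

/-!
The multipliers of `f` are `f (w + 1) = e^λ f w` and `f (w + τ) = f w`. Then `f z * f (-z)` is
doubly periodic, hence constant by Liouville. If `f` has a zero, this constant is `0`, and since
the entire functions form an integral domain, `f = 0`. Otherwise `f' / f` is doubly periodic,
hence a constant `μ`, so `f = f 0 * exp (μ z)`, and the multipliers give `μ = λ + 2πim` and
`μτ = 2πik`. Comparing real and imaginary parts gives `m |τ|² = k Re τ`, while for `m = 0` the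
condition `λ ≠ 0` forces `Re τ = 0`; either way `Re τ / |τ|²` is rational.
-/

open Complex Function Set Bornology Real

lemma Dtau_one {τ : ℂ} (hτ : τ.im ≠ 0) : Dtau τ 1 = 1 := by
  have : τ - (starRingEnd ℂ) τ ≠ 0 := by
    rw [sub_conj]; simpa [Complex.ext_iff] using hτ
  simp [Dtau, this]

lemma Dtau_self (τ : ℂ) : Dtau τ τ = 0 := by
  simp [Dtau, mul_comm]

lemma exists_real_eq_add_mul {τ : ℂ} (hτ : τ.im ≠ 0) (w : ℂ) :
    ∃ s t : ℝ, (s : ℂ) + t * τ = w :=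
  ⟨w.re - w.im / τ.im * τ.re, w.im / τ.im, by
    apply Complex.ext <;> simp; field_simp⟩

theorem Continuous.isBounded_range_of_periodic_of_periodic {E : Type*} [PseudoMetricSpace E]
    {g : ℂ → E} (hg : Continuous g) {τ : ℂ} (hτ : τ.im ≠ 0) (h1 : Periodic g 1)
    (hτg : Periodic g τ) : IsBounded (range g) := by
  have hK : IsCompact ((fun p : ℝ × ℝ => g (p.1 + p.2 * τ)) '' (Icc 0 1 ×ˢ Icc 0 1)) :=
    (isCompact_Icc.prod isCompact_Icc).image (by fun_prop)
  refine hK.isBounded.subset ?_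
  rintro _ ⟨w, rfl⟩
  obtain ⟨s, t, rfl⟩ := exists_real_eq_add_mul hτ w
  refine ⟨(Int.fract s, Int.fract t), ⟨⟨Int.fract_nonneg s, (Int.fract_lt_one s).le⟩,
    ⟨Int.fract_nonneg t, (Int.fract_lt_one t).le⟩⟩, ?_⟩
  calc g (Int.fract s + Int.fract t * τ)
      = g ((s + t * τ) - ⌊s⌋ * 1 - ⌊t⌋ * τ) := by
        congr 1; simp only [Int.fract, Complex.ofReal_sub, Complex.ofReal_intCast]; ring
    _ = g (s + t * τ) := by rw [hτg.sub_int_mul_eq, h1.sub_int_mul_eq]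

theorem Differentiable.apply_eq_apply_of_periodic_of_periodic {E : Type*} [NormedAddCommGroup E]
    [NormedSpace ℂ E] {g : ℂ → E} (hg : Differentiable ℂ g) {τ : ℂ} (hτ : τ.im ≠ 0)
    (h1 : Periodic g 1) (hτg : Periodic g τ) (z w : ℂ) : g z = g w :=
  hg.apply_eq_apply_of_bounded
    (hg.continuous.isBounded_range_of_periodic_of_periodic hτ h1 hτg) z w

section Quasiperiodic

variable {f : ℂ → ℂ} {c A : ℂ}

lemma periodic_mul_comp_neg_of_quasiperiodic (h : ∀ w, f (w + c) = A * f w) :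
    Periodic (fun z => f z * f (-z)) c := fun z => by
  have h' := h (-(z + c))
  rw [show -(z + c) + c = -z by ring] at h'
  simp only [h z, h']
  ring

lemma periodic_logDeriv_of_quasiperiodic (hA : A ≠ 0) (h : ∀ w, f (w + c) = A * f w) :
    Periodic (logDeriv f) c := fun z => by
  have hfun : (fun w => f (w + c)) = fun w => A * f w := funext h
  rw [logDeriv_apply, ← deriv_comp_add_const, hfun, h, ← logDeriv_apply,
    logDeriv_const_mul _ _ hA]

end Quasiperiodic

lemma Differentiable.eq_zero_or_forall_ne_zero_of_quasiperiodic {f : ℂ → ℂ}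
    (hf : Differentiable ℂ f) {τ A B : ℂ} (hτ : τ.im ≠ 0) (h1 : ∀ w, f (w + 1) = A * f w)
    (hτf : ∀ w, f (w + τ) = B * f w) : f = 0 ∨ ∀ z, f z ≠ 0 := by
  refine or_iff_not_imp_right.2 fun hzero => ?_
  push Not at hzero
  obtain ⟨z₀, hz₀⟩ := hzero
  have hf_neg : Differentiable ℂ fun z => f (-z) := hf.comp differentiable_neg
  have hprod_diff : Differentiable ℂ fun z => f z * f (-z) := hf.mul hf_neg
  have hprod : ∀ z, f z * f (-z) = 0 := fun z => by
    rw [hprod_diff.apply_eq_apply_of_periodic_of_periodic hτ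
      (periodic_mul_comp_neg_of_quasiperiodic h1) (periodic_mul_comp_neg_of_quasiperiodic hτf)
      z z₀, hz₀, zero_mul]
  rcases (analyticOnNhd_univ_iff_differentiable.2 hf).eq_zero_or_eq_zero_of_mul_eq_zero
    (analyticOnNhd_univ_iff_differentiable.2 hf_neg) (fun z _ => hprod z)
    isPreconnected_univ with h | h
  · exact funext fun z => h z trivial
  · exact funext fun z => by simpa using h (-z) trivial

lemma Differentiable.eq_mul_exp_of_logDeriv_eq {f : ℂ → ℂ} (hf : Differentiable ℂ f)
    (hf0 : ∀ z, f z ≠ 0) {μ : ℂ} (hμ : ∀ z, logDeriv f z = μ) (z : ℂ) :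
    f z = f 0 * cexp (μ * z) := by
  have hexp : ∀ z, logDeriv (fun w => cexp (μ * w)) z = μ := fun z => by
    rw [show (fun w => cexp (μ * w)) = cexp ∘ (μ * ·) from rfl,
      logDeriv_comp (by fun_prop) (by fun_prop)]
    simp [Complex.logDeriv_exp]
  obtain ⟨a, -, ha⟩ := (logDeriv_eqOn_iff (s := univ) hf.differentiableOn
    (by fun_prop : Differentiable ℂ fun w => cexp (μ * w)).differentiableOn isOpen_univ
    isPreconnected_univ (fun _ _ => Complex.exp_ne_zero _) (fun z _ => hf0 z)).1
    fun z _ => by rw [hμ, hexp]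
  have h0 := ha (mem_univ 0)
  have hz := ha (mem_univ z)
  simp only [Pi.smul_apply, smul_eq_mul, mul_zero, Complex.exp_zero, mul_one] at h0 hz
  rw [hz, h0]

theorem Differentiable.eq_zero_or_exists_eq_mul_exp_of_quasiperiodic {f : ℂ → ℂ}
    (hf : Differentiable ℂ f) {τ A B : ℂ} (hτ : τ.im ≠ 0) (h1 : ∀ w, f (w + 1) = A * f w)
    (hτf : ∀ w, f (w + τ) = B * f w) :
    f = 0 ∨ ∃ μ, cexp μ = A ∧ cexp (μ * τ) = B ∧ ∀ z, f z = f 0 * cexp (μ * z) := by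
  refine (hf.eq_zero_or_forall_ne_zero_of_quasiperiodic hτ h1 hτf).imp_right fun hf0 => ?_
  have hA : A ≠ 0 := fun hA => hf0 1 (by simpa [hA] using h1 0)
  have hB : B ≠ 0 := fun hB => hf0 τ (by simpa [hB] using hτf 0)
  have hlog : Differentiable ℂ (logDeriv f) := hf.deriv.div hf hf0
  have hsol := hf.eq_mul_exp_of_logDeriv_eq hf0 fun z =>
    hlog.apply_eq_apply_of_periodic_of_periodic hτ (periodic_logDeriv_of_quasiperiodic hA h1)
      (periodic_logDeriv_of_quasiperiodic hB hτf) z 0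
  refine ⟨logDeriv f 0, mul_left_cancel₀ (hf0 0) ?_, mul_left_cancel₀ (hf0 0) ?_, hsol⟩
  · rw [mul_comm (f 0) A, ← h1 0, hsol (0 + 1), zero_add, mul_one]
  · rw [mul_comm (f 0) B, ← hτf 0, hsol (0 + τ), zero_add]

lemma exists_rat_eq_re_div_sq_norm {lam : ℝ} (hlam : lam ≠ 0) {τ : ℂ} {m k : ℤ}
    (h : (lam + m * (2 * π * I)) * τ = k * (2 * π * I)) :
    ∃ q : ℚ, τ.re / ‖τ‖ ^ 2 = q := by
  have hre := congrArg re h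
  have him := congrArg im h
  simp only [mul_re, mul_im, add_re, add_im, ofReal_re, ofReal_im, intCast_re, intCast_im,
    I_re, I_im, re_ofNat, im_ofNat] at hre him
  ring_nf at hre him
  rw [Complex.sq_norm, normSq_apply]
  have hkey : (m : ℝ) * (τ.re * τ.re + τ.im * τ.im) = k * τ.re := by
    have := Real.pi_pos
    apply mul_left_cancel₀ (by positivity : 2 * π ≠ 0)
    linear_combination τ.re * him - τ.im * hre
  have hm : m = 0 → τ.re = 0 := fun hm => by
    subst hm
    simpa [hlam] using hre
  rcases eq_or_ne (τ.re * τ.re + τ.im * τ.im) 0 with hN | hN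
  · exact ⟨0, by simp [hN]⟩
  rcases eq_or_ne k 0 with rfl | hk
  · simp only [Int.cast_zero, zero_mul, mul_eq_zero, hN, or_false, Int.cast_eq_zero] at hkey
    exact ⟨0, by simp [hm hkey]⟩
  · refine ⟨m / k, ?_⟩
    push_cast
    rw [div_eq_div_iff hN (by exact_mod_cast hk)]
    linear_combination -hkey

theorem stmt_16 (lam : ℝ) (hlam : lam ≠ 0) (τ : ℂ) (hτ : 0 < τ.im)
    (f : ℂ → ℂ) (hf : Differentiable ℂ f)
    (hfeq : ∀ α : ℂ, inLambda τ α → ∀ w : ℂ,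
      Complex.exp ((lam : ℂ) * Dtau τ α) * f w = f (α + w)) :
    ∃ (c : ℂ) (m : ℤ),
      (∀ w : ℂ, f w = c * Complex.exp ((2 * Real.pi * Complex.I * m + (lam : ℂ)) * w)) ∧
      ((¬ ∃ q : ℚ, τ.re / ‖τ‖ ^ 2 = (q : ℝ)) → c = 0) := by
  have hτ₀ : τ.im ≠ 0 := hτ.ne'
  have h1 : ∀ w, f (w + 1) = cexp lam * f w := fun w => by
    simpa [Dtau_one hτ₀, add_comm] using (hfeq 1 ⟨1, 0, by simp⟩ w).symm
  have hτf : ∀ w, f (w + τ) = 1 * f w := fun w => by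
    simpa [Dtau_self, add_comm] using (hfeq τ ⟨0, 1, by simp⟩ w).symm
  rcases hf.eq_zero_or_exists_eq_mul_exp_of_quasiperiodic hτ₀ h1 hτf with
    rfl | ⟨μ, hμ1, hμτ, hsol⟩
  · exact ⟨0, 0, fun w => by simp, fun _ => rfl⟩
  obtain ⟨m, rfl⟩ := exp_eq_exp_iff_exists_int.1 hμ1
  obtain ⟨k, hk⟩ := exp_eq_one_iff.1 hμτ
  exact ⟨f 0, m, fun w => by rw [hsol]; ring_nf,
    fun hirr => (hirr (exists_rat_eq_re_div_sq_norm hlam hk)).elim⟩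
end
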